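/- arXiv:1707.05866 — 2 statements merged into one kernel-verified Lean document; each statement's English description precedes it below -/
import Mathlib

section
/- Let p(N) be a sequence in (0,1] with N·p(N) → ∞. Set n(N) = ⌈N / sqrt(N·p(N))⌉. Then n(N)/N → 0 and, for every fixed ε ∈ (0,1), the quantity C(N, ⌈εN⌉) · C(N, n(N)) · (1 - p(N))^{⌈εN⌉ · n(N)} tends to 0 as N → ∞. -/
/-!
Both binomial coefficients are at most `2 ^ N`, while `(1 - p) ^ m ≤ exp (-p m)`. With
`k = ⌈εN⌉` and `n ≥ N / √(Np)` the exponent `p k n` is at least `ε N √(Np)`, which beats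
`2 N log 2` once `√(Np) → ∞`, so the product is eventually below `exp (-N)`.
-/

open Filter Real Topology

lemma one_sub_pow_le_exp_neg_mul {p : ℝ} (hp : p ≤ 1) (m : ℕ) :
    (1 - p) ^ m ≤ exp (-(p * m)) :=
  calc (1 - p) ^ m ≤ exp (-p) ^ m := pow_le_pow_left₀ (by linarith) (one_sub_le_exp_neg p) m
    _ = exp (-(p * m)) := by rw [← exp_nat_mul]; ring_nf

lemma tendsto_choose_mul_choose_mul_one_sub_pow {p : ℕ → ℝ} (hp : ∀ N, p N ≤ 1)
    (k n : ℕ → ℕ) (h : Tendsto (fun N : ℕ => p N * (k N * n N) / N) atTop atTop) :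
    Tendsto (fun N : ℕ => (N.choose (k N) : ℝ) * N.choose (n N) * (1 - p N) ^ (k N * n N))
      atTop (𝓝 0) := by
  refine squeeze_zero' (Eventually.of_forall fun N => ?_) ?_
    (tendsto_exp_neg_atTop_nhds_zero.comp tendsto_natCast_atTop_atTop)
  · have : 0 ≤ 1 - p N := by linarith [hp N]
    positivity
  filter_upwards [eventually_gt_atTop 0, h.eventually_ge_atTop (2 * log 2 + 1)] with N hN hpN
  set m := k N * n N
  have hN : (0 : ℝ) < N := by exact_mod_cast hN
  have hexponent : (2 * log 2 + 1) * N ≤ p N * m := by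
    rw [le_div_iff₀ hN] at hpN
    exact_mod_cast hpN
  have htwo_pow : (2 : ℝ) ^ N = exp (N * log 2) := by rw [exp_nat_mul, exp_log two_pos]
  have hchoose (j : ℕ) : (N.choose j : ℝ) ≤ 2 ^ N := by exact_mod_cast N.choose_le_two_pow j
  calc (N.choose (k N) : ℝ) * N.choose (n N) * (1 - p N) ^ m
      ≤ 2 ^ N * 2 ^ N * exp (-(p N * m)) := by
        have hp1 := hp N
        gcongr
        · exact hchoose _
        · exact hchoose _
        · exact one_sub_pow_le_exp_neg_mul hp1 m
    _ = exp (2 * N * log 2 - p N * m) := by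
        rw [htwo_pow, ← exp_add, ← exp_add]; ring_nf
    _ ≤ exp (-N) := exp_le_exp.2 (by linarith)

lemma tendsto_natCeil_div_natCast_zero {f : ℕ → ℝ} (hf : ∀ N, 0 ≤ f N)
    (h : Tendsto (fun N : ℕ => f N / N) atTop (𝓝 0)) :
    Tendsto (fun N : ℕ => (⌈f N⌉₊ : ℝ) / N) atTop (𝓝 0) := by
  have hbound : Tendsto (fun N : ℕ => f N / N + 1 / N) atTop (𝓝 0) := by
    simpa using h.add tendsto_one_div_atTop_nhds_zero_nat
  refine squeeze_zero (fun N => by positivity) (fun N => ?_) hbound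
  rw [← add_div]
  gcongr
  exact (Nat.ceil_lt_add_one (hf N)).le

lemma mul_sqrt_le_mul_mul_div {N p ε a b : ℝ} (hN : 0 < N) (hp : 0 < p) (hε : 0 ≤ ε)
    (ha : ε * N ≤ a) (hb : N / √(N * p) ≤ b) : ε * √(N * p) ≤ p * (a * b) / N := by
  have hsqrt : 0 < √(N * p) := sqrt_pos.2 (by positivity)
  calc ε * √(N * p) = p * (ε * N * (N / √(N * p))) / N := by
        field_simp
        rw [sq_sqrt (by positivity)]
        ring
    _ ≤ p * (a * b) / N := by
        have : 0 ≤ a := (by positivity : 0 ≤ ε * N).trans ha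
        gcongr

theorem stmt9 (p : ℕ → ℝ) (hp : ∀ N, 0 < p N ∧ p N ≤ 1)
    (hdiv : Filter.Tendsto (fun N : ℕ => (N : ℝ) * p N) Filter.atTop Filter.atTop)
    (n : ℕ → ℕ) (hn : ∀ N, n N = ⌈(N : ℝ) / Real.sqrt (N * p N)⌉₊) :
    Filter.Tendsto (fun N : ℕ => (n N : ℝ) / N) Filter.atTop (nhds 0) ∧
    ∀ ε : ℝ, 0 < ε → ε < 1 →
      Filter.Tendsto (fun N : ℕ =>
          (N.choose ⌈ε * N⌉₊ : ℝ) * (N.choose (n N) : ℝ) * (1 - p N) ^ (⌈ε * N⌉₊ * n N))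
        Filter.atTop (nhds 0) := by
  have hsqrt : Tendsto (fun N : ℕ => √(N * p N)) atTop atTop := tendsto_sqrt_atTop.comp hdiv
  refine ⟨?_, fun ε hε _ => ?_⟩
  · simp only [hn]
    refine tendsto_natCeil_div_natCast_zero (fun N => by positivity)
      ((tendsto_inv_atTop_zero.comp hsqrt).congr' ?_)
    filter_upwards [eventually_gt_atTop 0] with N hN
    exact (div_div_cancel_left' (Nat.cast_ne_zero.2 hN.ne' : (N : ℝ) ≠ 0)).symm
  · refine tendsto_choose_mul_choose_mul_one_sub_pow (fun N => (hp N).2) _ _ ?_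
    refine tendsto_atTop_mono' _ ?_ (hsqrt.const_mul_atTop hε)
    filter_upwards [eventually_gt_atTop 0] with N hN
    exact mul_sqrt_le_mul_mul_div (by exact_mod_cast hN) (hp N).1 hε.le (Nat.le_ceil _)
      (hn N ▸ Nat.le_ceil _)
end

section
/- Let p(N) be a sequence in (0,1] with sqrt(N)·p(N)/log(N) → ∞. Set n(N) = ⌈sqrt(N) / sqrt(sqrt(N)·p(N)/log(N))⌉. Then n(N)/sqrt(N) → 0 and, for every fixed ε > 0, the quantity N^{ε sqrt(N)} · N^{n(N)} · exp(-ε sqrt(N)·p(N)·n(N)) tends to 0 as N → ∞. -/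
/-!
Write `a N = √N p N / log N`, so that `n N = ⌈√N / √(a N)⌉₊` and `√N p N = a N log N`.
Then `n N / √N ≤ 1 / √(a N) + 1 / √N`. The second quantity equals
`exp (log N (ε√N + n N - ε a N n N))`; eventually `ε a N ≥ 2` and `√(a N) ≥ 4`, and
`a N n N ≥ √(a N) √N`, so the bracket is at most `-ε√N` and the quantity is at most
`exp (-ε √N log N) → 0`.
-/

open Filter Real

lemma natCeil_div_div_le (s r : ℝ) (hs : 0 < s) (hr : 0 < r) :
    (⌈s / r⌉₊ : ℝ) / s ≤ r⁻¹ + s⁻¹ := by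
  have hceil : (⌈s / r⌉₊ : ℝ) ≤ s / r + 1 := (Nat.ceil_lt_add_one (by positivity)).le
  calc (⌈s / r⌉₊ : ℝ) / s ≤ (s / r + 1) / s := by gcongr
    _ = r⁻¹ + s⁻¹ := by field_simp

lemma add_sub_mul_le_neg {ε a s m : ℝ} (hε : 0 < ε) (ha : 16 ≤ a) (hεa : 2 ≤ ε * a)
    (hs : 0 ≤ s) (hm : s / √a ≤ m) : ε * s + m - ε * a * m ≤ -(ε * s) := by
  have hr : 4 ≤ √a := (le_sqrt (by norm_num) (by linarith)).mpr (by linarith)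
  have hrm : s ≤ √a * m := by rwa [div_le_iff₀' (by positivity)] at hm
  have hm0 : 0 ≤ m := (div_nonneg hs (sqrt_nonneg a)).trans hm
  have hsq : a = √a * √a := (mul_self_sqrt (by linarith)).symm
  have hhalf : m ≤ ε * a * m / 2 := by nlinarith
  have hquad : 4 * (ε * s) ≤ ε * a * m :=
    calc 4 * (ε * s) ≤ √a * (ε * s) := mul_le_mul_of_nonneg_right hr (by positivity)
      _ ≤ ε * √a * (√a * m) := by nlinarith [mul_le_mul_of_nonneg_left hrm hε.le]
      _ = ε * a * m := by linear_combination (-(ε * m)) * hsq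
  linarith

lemma rpow_mul_pow_mul_exp_eq {x : ℝ} (hx : 1 < x) (ε s q : ℝ) (m : ℕ) :
    x ^ (ε * s) * x ^ m * exp (-(ε * s * q * m)) =
      exp (log x * (ε * s + m - ε * (s * q / log x) * m)) := by
  have hlog : log x ≠ 0 := (log_pos hx).ne'
  rw [rpow_def_of_pos (by linarith), ← rpow_natCast, rpow_def_of_pos (by linarith),
    ← exp_add, ← exp_add]
  congr 1
  field_simp
  ring

lemma rpow_mul_pow_mul_exp_le {x ε s q : ℝ} {m : ℕ} (hx : 1 < x) (hε : 0 < ε) (hs : 0 ≤ s)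
    (ha : 16 ≤ s * q / log x) (hεa : 2 ≤ ε * (s * q / log x))
    (hm : s / √(s * q / log x) ≤ m) :
    x ^ (ε * s) * x ^ m * exp (-(ε * s * q * m)) ≤ exp (-(ε * s * log x)) := by
  rw [rpow_mul_pow_mul_exp_eq hx]
  apply exp_le_exp.mpr
  calc log x * (ε * s + m - ε * (s * q / log x) * m) ≤ log x * -(ε * s) :=
        mul_le_mul_of_nonneg_left (add_sub_mul_le_neg hε ha hεa hs hm) (log_pos hx).le
    _ = -(ε * s * log x) := by ring

theorem stmt10_general (p : ℕ → ℝ)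
    (hdiv : Filter.Tendsto (fun N : ℕ => Real.sqrt N * p N / Real.log N)
      Filter.atTop Filter.atTop)
    (n : ℕ → ℕ)
    (hn : ∀ N, n N = ⌈Real.sqrt N / Real.sqrt (Real.sqrt N * p N / Real.log N)⌉₊) :
    Filter.Tendsto (fun N : ℕ => (n N : ℝ) / Real.sqrt N) Filter.atTop (nhds 0) ∧
    ∀ ε : ℝ, 0 < ε →
      Filter.Tendsto (fun N : ℕ =>
          (N : ℝ) ^ (ε * Real.sqrt N) * (N : ℝ) ^ (n N) *
            Real.exp (-(ε * Real.sqrt N * p N * n N)))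
        Filter.atTop (nhds 0) := by
  have hsqrtN : Tendsto (fun N : ℕ => √(N : ℝ)) atTop atTop :=
    tendsto_sqrt_atTop.comp tendsto_natCast_atTop_atTop
  constructor
  · have hbound :
        Tendsto (fun N : ℕ => (√(√N * p N / log N))⁻¹ + (√(N : ℝ))⁻¹) atTop (nhds 0) := by
      simpa using (tendsto_sqrt_atTop.comp hdiv).inv_tendsto_atTop.add hsqrtN.inv_tendsto_atTop
    refine squeeze_zero' (Eventually.of_forall fun N => by positivity) ?_ hbound
    filter_upwards [eventually_ge_atTop 1, hdiv.eventually_gt_atTop 0] with N hN ha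
    rw [hn N]
    exact natCeil_div_div_le _ _ (by positivity) (sqrt_pos.mpr ha)
  · intro ε hε
    have hlim : Tendsto (fun N : ℕ => exp (-(ε * √N * log N))) atTop (nhds 0) :=
      tendsto_exp_atBot.comp <| tendsto_neg_atTop_atBot.comp <|
        (hsqrtN.const_mul_atTop hε).atTop_mul_atTop₀
          (tendsto_log_atTop.comp tendsto_natCast_atTop_atTop)
    refine squeeze_zero' (Eventually.of_forall fun N => by positivity) ?_ hlim
    filter_upwards [eventually_ge_atTop 2, hdiv.eventually_ge_atTop 16,
      hdiv.eventually_ge_atTop (2 / ε)] with N hN ha hεa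
    exact rpow_mul_pow_mul_exp_le (by exact_mod_cast hN) hε (sqrt_nonneg _) ha
      ((div_le_iff₀' hε).mp hεa) (hn N ▸ Nat.le_ceil _)

theorem stmt10 (p : ℕ → ℝ) (hp : ∀ N, 0 < p N ∧ p N ≤ 1)
    (hdiv : Filter.Tendsto (fun N : ℕ => Real.sqrt N * p N / Real.log N)
      Filter.atTop Filter.atTop)
    (n : ℕ → ℕ)
    (hn : ∀ N, n N = ⌈Real.sqrt N / Real.sqrt (Real.sqrt N * p N / Real.log N)⌉₊) :
    Filter.Tendsto (fun N : ℕ => (n N : ℝ) / Real.sqrt N) Filter.atTop (nhds 0) ∧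
    ∀ ε : ℝ, 0 < ε →
      Filter.Tendsto (fun N : ℕ =>
          (N : ℝ) ^ (ε * Real.sqrt N) * (N : ℝ) ^ (n N) *
            Real.exp (-(ε * Real.sqrt N * p N * n N)))
        Filter.atTop (nhds 0) :=
  stmt10_general p hdiv n hn
end
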